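/- Let F be a field of characteristic zero and let Δ = δ_0 ∘ {P_1(D),...,P_n(D)} be interpolation conditions given by polynomials P_1,...,P_n ∈ F[x_1,...,x_d]. If T = {X^{β_1},...,X^{β_n}} is a monomial interpolating basis for Δ, then T ⊆ Λ{P_1,...,P_n}; that is, every monomial in T occurs with nonzero coefficient in at least one of the polynomials P_1,...,P_n. -/

import Mathlib

/-!
Since `D^α X^b` has zero constant term unless `α = b`, the functional `δ₀ ∘ P(D)` sends `X^b`
to `b! · P̂(b)`. So a monomial `X^β` occurring in none of the `P_i` is annihilated by every
condition, and then `X^β` and `0` are two interpolants in `span T` of the zero data.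
-/

open MvPolynomial

/-- The iterated partial derivative operator `D^α = ∂^{α_1}_{x_1} ⋯ ∂^{α_d}_{x_d}`. -/
noncomputable def Dmon (F : Type*) [CommSemiring F] {d : ℕ} (α : Fin d →₀ ℕ) :
    Module.End F (MvPolynomial (Fin d) F) :=
  ((List.finRange d).map fun i =>
    ((pderiv i : Derivation F (MvPolynomial (Fin d) F) (MvPolynomial (Fin d) F)) :
      MvPolynomial (Fin d) F →ₗ[F] MvPolynomial (Fin d) F) ^ (α i)).prod

/-- The differential operator `P(D) = Σ_α P̂(α) D^α` induced by a polynomial `P`. -/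
noncomputable def PD {F : Type*} [Field F] {d : ℕ} (P : MvPolynomial (Fin d) F) :
    Module.End F (MvPolynomial (Fin d) F) :=
  ∑ α ∈ P.support, P.coeff α • Dmon F α

/-- The linear functional `δ₀ ∘ P(D) : g ↦ (P(D) g)(0)`. -/
noncomputable def delta0PD {F : Type*} [Field F] {d : ℕ} (P : MvPolynomial (Fin d) F) :
    MvPolynomial (Fin d) F →ₗ[F] F :=
  (MvPolynomial.aeval (0 : Fin d → F)).toLinearMap ∘ₗ PD P

/-- `prec` is a monomial ordering: a linear well-ordering of the monomials (identified with
their exponent vectors) that is compatible with multiplication of monomials. -/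
structure IsMonomialOrder {d : ℕ} (prec : (Fin d →₀ ℕ) → (Fin d →₀ ℕ) → Prop) : Prop where
  irrefl : ∀ a, ¬ prec a a
  trans : ∀ a b c, prec a b → prec b c → prec a c
  total : ∀ a b, a ≠ b → prec a b ∨ prec b a
  wf : WellFounded prec
  add_compat : ∀ a b c, prec a b → prec (a + c) (b + c)

/-- `m` is the `prec`-least monomial occurring in `P` with nonzero coefficient,
i.e. `X^m = lm(P)`. -/
def IsLeastMon {F : Type*} [Field F] {d : ℕ} (prec : (Fin d →₀ ℕ) → (Fin d →₀ ℕ) → Prop)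
    (P : MvPolynomial (Fin d) F) (m : Fin d →₀ ℕ) : Prop :=
  m ∈ P.support ∧ ∀ m' ∈ P.support, m' ≠ m → prec m m'

/-- `{P_1, ..., P_n}` is a "reverse" reduced basis w.r.t. `prec`: the `P_i` are linearly
independent and `lm(P_i) ∉ Λ{P_j}` for all `i < j`. -/
def IsRevReducedBasis {F : Type*} [Field F] {d n : ℕ}
    (prec : (Fin d →₀ ℕ) → (Fin d →₀ ℕ) → Prop) (P : Fin n → MvPolynomial (Fin d) F) : Prop :=
  LinearIndependent F P ∧
    ∀ i j : Fin n, i < j → ∀ m, IsLeastMon prec (P i) m → m ∉ (P j).support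

/-- `T = {X^{β_1}, ..., X^{β_n}}` (indexed by the injective family `β`) is a monomial
interpolating basis for the interpolation conditions `lam_1, ..., lam_n`: for every vector of
values `f` there is a unique `g` in the span of `T` with `lam i g = f i` for all `i`. -/
def IsMonIntBasisFam {F : Type*} [Field F] {d n : ℕ}
    (lam : Fin n → (MvPolynomial (Fin d) F →ₗ[F] F)) (β : Fin n → (Fin d →₀ ℕ)) : Prop :=
  ∀ f : Fin n → F, ∃! g : MvPolynomial (Fin d) F,
    g ∈ Submodule.span F (Set.range fun j => (monomial (β j) (1 : F) : MvPolynomial (Fin d) F))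
      ∧ ∀ i, lam i g = f i

section Dmon

variable {R σ : Type*} [CommSemiring R]

theorem pderiv_pow_monomial (i : σ) (k : ℕ) (b : σ →₀ ℕ) (c : R) :
    (((pderiv i : Derivation R (MvPolynomial σ R) (MvPolynomial σ R)) :
      MvPolynomial σ R →ₗ[R] MvPolynomial σ R) ^ k) (monomial b c)
      = monomial (b - Finsupp.single i k) ((b i).descFactorial k * c) := by
  induction k with
  | zero => simp
  | succ k ih =>
    rw [pow_succ', Module.End.mul_apply, ih, Derivation.coeFn_coe, pderiv_monomial,
      tsub_tsub, ← Finsupp.single_add, Nat.descFactorial_succ]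
    simp only [Finsupp.tsub_apply, Finsupp.single_eq_same, Nat.cast_mul]
    congr 1
    ring

theorem list_prod_pderiv_pow_monomial [DecidableEq σ] (α : σ →₀ ℕ) {l : List σ}
    (hl : l.Nodup) (b : σ →₀ ℕ) (c : R) :
    (l.map fun i => ((pderiv i : Derivation R (MvPolynomial σ R) (MvPolynomial σ R)) :
      MvPolynomial σ R →ₗ[R] MvPolynomial σ R) ^ α i).prod
        (monomial b c)
      = monomial (b - ∑ i ∈ l.toFinset, Finsupp.single i (α i))
          ((∏ i ∈ l.toFinset, ((b i).descFactorial (α i) : R)) * c) := by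
  induction l generalizing b c with
  | nil => simp
  | cons i l ih =>
    obtain ⟨hi, hl⟩ := List.nodup_cons.mp hl
    have hi' : i ∉ l.toFinset := List.mem_toFinset.not.mpr hi
    have hbi : (b - ∑ j ∈ l.toFinset, Finsupp.single j (α j)) i = b i := by
      simp [Finsupp.single_apply, hi']
    rw [List.map_cons, List.prod_cons, Module.End.mul_apply, ih hl, pderiv_pow_monomial, hbi,
      List.toFinset_cons, Finset.sum_insert hi', Finset.prod_insert hi', tsub_tsub, add_comm,
      mul_assoc]

theorem Dmon_monomial {d : ℕ} (α b : Fin d →₀ ℕ) (c : R) :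
    Dmon R α (monomial b c)
      = monomial (b - α) ((∏ i, ((b i).descFactorial (α i) : R)) * c) := by
  rw [Dmon, list_prod_pderiv_pow_monomial α (List.nodup_finRange d), List.toFinset_finRange,
    Finsupp.univ_sum_single]

theorem constantCoeff_Dmon_monomial {d : ℕ} (α b : Fin d →₀ ℕ) (c : R) :
    constantCoeff (Dmon R α (monomial b c))
      = if α = b then (∏ i, ((b i).factorial : R)) * c else 0 := by
  rw [Dmon_monomial, constantCoeff_monomial]
  split_ifs with hsub hab hab
  · subst hab
    simp [Nat.descFactorial_self]
  · obtain ⟨i, hi⟩ : ∃ i, b i < α i := by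
      by_contra! h
      exact hab (le_antisymm h (tsub_eq_zero_iff_le.mp hsub))
    rw [Finset.prod_eq_zero (Finset.mem_univ i) (by simp [Nat.descFactorial_eq_zero_iff_lt.mpr hi]),
      zero_mul]
  · simp [hab] at hsub
  · rfl

end Dmon

theorem delta0PD_monomial {F : Type*} [Field F] {d : ℕ} (P : MvPolynomial (Fin d) F)
    (b : Fin d →₀ ℕ) (c : F) :
    delta0PD P (monomial b c) = P.coeff b * ((∏ i, ((b i).factorial : F)) * c) := by
  simp only [delta0PD, PD, LinearMap.comp_apply, LinearMap.sum_apply, LinearMap.smul_apply,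
    map_sum, map_smul, AlgHom.toLinearMap_apply, aeval_zero, constantCoeff_Dmon_monomial,
    Algebra.algebraMap_self, RingHom.id_apply, smul_eq_mul, mul_ite, mul_zero,
    Finset.sum_ite_eq', mem_support_iff]
  split_ifs with h
  · rfl
  · rw [notMem_support_iff.mp h, zero_mul]

theorem IsMonIntBasisFam.exists_apply_monomial_ne_zero {F : Type*} [Field F] {d n : ℕ}
    {lam : Fin n → (MvPolynomial (Fin d) F →ₗ[F] F)} {β : Fin n → (Fin d →₀ ℕ)}
    (hT : IsMonIntBasisFam lam β) (j : Fin n) : ∃ i, lam i (monomial (β j) 1) ≠ 0 := by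
  by_contra! h
  obtain ⟨g, -, huniq⟩ := hT 0
  have h0 : 0 = g := huniq 0 ⟨Submodule.zero_mem _, fun i => map_zero _⟩
  have hX : monomial (β j) 1 = g := huniq _ ⟨Submodule.subset_span ⟨j, rfl⟩, h⟩
  exact one_ne_zero (monomial_eq_zero.mp (hX.trans h0.symm))

theorem monIntBasis_subset_interpMonomials_general {F : Type*} [Field F] {d n : ℕ}
    (P : Fin n → MvPolynomial (Fin d) F)
    (β : Fin n → (Fin d →₀ ℕ))
    (hT : IsMonIntBasisFam (fun i => delta0PD (P i)) β) :
    ∀ j : Fin n, ∃ i : Fin n, β j ∈ (P i).support := by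
  intro j
  obtain ⟨i, hi⟩ := hT.exists_apply_monomial_ne_zero j
  refine ⟨i, mem_support_iff.mpr fun hzero => hi ?_⟩
  rw [delta0PD_monomial, hzero, zero_mul]

/-- If `T = {X^{β_1}, ..., X^{β_n}}` is a monomial interpolating basis for
`Δ = δ₀ ∘ {P_1(D), ..., P_n(D)}`, then every monomial of `T` occurs with nonzero coefficient
in at least one of the `P_i`, i.e. `T ⊆ Λ{P_1, ..., P_n}`. -/
theorem monIntBasis_subset_interpMonomials {F : Type*} [Field F] [CharZero F] {d n : ℕ}
    (P : Fin n → MvPolynomial (Fin d) F)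
    (β : Fin n → (Fin d →₀ ℕ)) (hβ : Function.Injective β)
    (hT : IsMonIntBasisFam (fun i => delta0PD (P i)) β) :
    ∀ j : Fin n, ∃ i : Fin n, β j ∈ (P i).support :=
  monIntBasis_subset_interpMonomials_general P β hT
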